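/- arXiv:2409.18195 — 3 statements merged into one kernel-verified Lean document; each statement's English description precedes it below -/
import Mathlib

section
/- For m ≥ 2, the distinguishing index of the Mycielskian of the star K_{1,m} satisfies Dist′(μ(K_{1,m})) ≥ r, where r is the minimum natural number such that r² ≥ m + 1; that is, μ(K_{1,m}) has no distinguishing edge coloring with fewer than r colors. -/
open SimpleGraph

universe u

/-- A distinguishing edge coloring: no nontrivial automorphism preserves the coloring. -/
def IsDistEdgeColoring {V : Type u} (G : SimpleGraph V) {C : Type*} (c : G.edgeSet → C) : Prop :=
  ∀ φ : G ≃g G, (∀ e : G.edgeSet, c (φ.mapEdgeSet e) = c e) → ∀ v, φ v = v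

/-- The distinguishing index: least number of colors in a distinguishing edge coloring. -/
noncomputable def distIndex {V : Type u} (G : SimpleGraph V) : ℕ :=
  sInf {k : ℕ | ∃ c : G.edgeSet → Fin k, IsDistEdgeColoring G c}

/-- The star `K_{1,m}` with center `0`. -/
def starGraph (m : ℕ) : SimpleGraph (Fin (m + 1)) :=
  SimpleGraph.fromRel fun a _ => a = 0

/-- The Mycielskian: `Sum.inl a` are original vertices, `Sum.inr (Sum.inl a)` their
shadows, and `Sum.inr (Sum.inr _)` the root. -/
def myc {V : Type u} (G : SimpleGraph V) : SimpleGraph (V ⊕ V ⊕ PUnit.{u+1}) :=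
  SimpleGraph.fromRel fun x y =>
    match x, y with
    | Sum.inl a, Sum.inl b => G.Adj a b
    | Sum.inl a, Sum.inr (Sum.inl b) => G.Adj a b
    | Sum.inr (Sum.inl _), Sum.inr (Sum.inr _) => True
    | _, _ => False

/-- The generalized Mycielskian with `t` extra levels: `Sum.inl (j, a)` is the level-`j`
copy of vertex `a` (level `0` being the original vertices), and `Sum.inr _` is the root. -/
def genMyc {V : Type u} (G : SimpleGraph V) (t : ℕ) :
    SimpleGraph ((Fin (t + 1) × V) ⊕ PUnit.{u+1}) :=
  SimpleGraph.fromRel fun x y =>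
    match x, y with
    | Sum.inl (j, a), Sum.inl (k, b) =>
        ((j.val = 0 ∧ k.val = 0) ∨ k.val = j.val + 1) ∧ G.Adj a b
    | Sum.inl (j, _), Sum.inr _ => j.val = t
    | _, _ => False

/-!
In `μ(K_{1,m})` the leaves `v₁, …, v_m` all have neighbourhood `{v₀, u₀}` and their shadows
`u₁, …, u_m` all have neighbourhood `{v₀, w}`. Swapping two such twins is an automorphism, so a
distinguishing colouring with colour set `C` gives the leaves pairwise distinct colour pairs in
`C × C`, and likewise the shadows: `m ≤ |C|²`. If `m = |C|²`, both pair maps are bijections, so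
there is a permutation `σ` with the pair at `u_{σ i}` equal to the pair at `v_i`; the involution
fixing `v₀`, exchanging `v_i ↔ u_{σ i}` and `u₀ ↔ w`, then preserves the colouring but moves `w`.
-/

lemma apply_swap_swap_of_symmetric {α β : Type*} [DecidableEq α] {M : α → α → β}
    (hM : ∀ a b, M a b = M b a) {x y : α} (hxy : M x = M y) (a b : α) :
    M (Equiv.swap x y a) (Equiv.swap x y b) = M a b := by
  have hrow := congrFun hxy
  have hsymm := hM x y
  simp only [Equiv.swap_apply_def]
  split_ifs <;> subst_vars <;> grind

section EdgeColoring

variable {V : Type u} {G : SimpleGraph V} {C : Type*} {c : G.edgeSet → C}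

open Classical in
noncomputable def edgeColor (c : G.edgeSet → C) (x y : V) : Option C :=
  if h : G.Adj x y then some (c ⟨s(x, y), h⟩) else none

lemma edgeColor_of_adj {x y : V} (h : G.Adj x y) : edgeColor c x y = some (c ⟨s(x, y), h⟩) :=
  dif_pos h

lemma edgeColor_of_not_adj {x y : V} (h : ¬ G.Adj x y) : edgeColor c x y = none :=
  dif_neg h

lemma edgeColor_comm (x y : V) : edgeColor c x y = edgeColor c y x := by
  by_cases h : G.Adj x y
  · rw [edgeColor_of_adj h, edgeColor_of_adj h.symm]
    exact congrArg (some ∘ c) (Subtype.ext Sym2.eq_swap)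
  · rw [edgeColor_of_not_adj h, edgeColor_of_not_adj (mt G.adj_symm h)]

lemma adj_iff_edgeColor_ne_none {x y : V} : G.Adj x y ↔ edgeColor c x y ≠ none := by
  by_cases h : G.Adj x y <;> simp [h, edgeColor_of_adj, edgeColor_of_not_adj]

lemma IsDistEdgeColoring.apply_eq_of_involutive (hc : IsDistEdgeColoring G c) {f : V → V}
    (hf : Function.Involutive f)
    (hfc : ∀ x y, G.Adj x y → edgeColor c (f x) (f y) = edgeColor c x y) (v : V) : f v = v := by
  have hadj : ∀ {x y}, G.Adj x y → G.Adj (f x) (f y) := fun h =>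
    adj_iff_edgeColor_ne_none.2 ((hfc _ _ h).trans_ne (adj_iff_edgeColor_ne_none.1 h))
  let φ : G ≃g G :=
    { toEquiv := hf.toPerm f
      map_rel_iff' := fun {x y} => ⟨fun h => by simpa [hf x, hf y] using hadj h, hadj⟩ }
  refine hc φ ?_ v
  rintro ⟨e, he⟩
  induction e using Sym2.ind with
  | h x y =>
    have := hfc x y he
    rw [edgeColor_of_adj he, edgeColor_of_adj (hadj he)] at this
    exact Option.some_injective _ this

lemma IsDistEdgeColoring.edgeColor_injective (hc : IsDistEdgeColoring G c) :
    Function.Injective (edgeColor c) := by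
  classical
  intro x y hxy
  have := hc.apply_eq_of_involutive (Equiv.swap_apply_self x y)
    (fun a b _ => apply_swap_swap_of_symmetric edgeColor_comm hxy a b) x
  simpa [eq_comm] using this

lemma IsDistEdgeColoring.injective_colorPair (hc : IsDistEdgeColoring G c) {ι : Type*}
    {f : ι → V} (hf : Function.Injective f) {a b : V} (ha : ∀ i, G.Adj (f i) a)
    (hb : ∀ i, G.Adj (f i) b) (hN : ∀ i z, G.Adj (f i) z → z = a ∨ z = b) :
    Function.Injective fun i => (c ⟨s(f i, a), ha i⟩, c ⟨s(f i, b), hb i⟩) := by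
  intro i j hij
  obtain ⟨hija, hijb⟩ := Prod.mk.inj hij
  refine hf (hc.edgeColor_injective (funext fun z => ?_))
  by_cases hza : z = a
  · subst hza
    rw [edgeColor_of_adj (ha i), edgeColor_of_adj (ha j), hija]
  by_cases hzb : z = b
  · subst hzb
    rw [edgeColor_of_adj (hb i), edgeColor_of_adj (hb j), hijb]
  have hz : ∀ k, ¬ G.Adj (f k) z := fun k h => (hN k z h).elim hza hzb
  rw [edgeColor_of_not_adj (hz i), edgeColor_of_not_adj (hz j)]

lemma isDistEdgeColoring_of_injective (hG : ∀ v, ∃ x y, x ≠ y ∧ G.Adj v x ∧ G.Adj v y)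
    (hc : Function.Injective c) : IsDistEdgeColoring G c := by
  intro φ hφ v
  have fixes : ∀ {x}, G.Adj v x → φ v = v ∨ φ v = x := fun {x} h => by
    have : s(φ v, φ x) = s(v, x) := congrArg Subtype.val (hc (hφ ⟨s(v, x), h⟩))
    rw [Sym2.eq_iff] at this
    tauto
  obtain ⟨x, y, hxy, hx, hy⟩ := hG v
  rcases fixes hx with h | rfl
  · exact h
  · exact (fixes hy).resolve_right hxy

lemma exists_isDistEdgeColoring_distIndex [Finite V]
    (hG : ∀ v, ∃ x y, x ≠ y ∧ G.Adj v x ∧ G.Adj v y) :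
    ∃ c : G.edgeSet → Fin (distIndex G), IsDistEdgeColoring G c := by
  have hne : {k : ℕ | ∃ c : G.edgeSet → Fin k, IsDistEdgeColoring G c}.Nonempty :=
    ⟨_, Finite.equivFin G.edgeSet,
      isDistEdgeColoring_of_injective hG (Finite.equivFin G.edgeSet).injective⟩
  exact Nat.sInf_mem hne

end EdgeColoring

section Mycielskian

variable {V : Type u} {G : SimpleGraph V} {a b : V}

@[simp] lemma myc_adj_inl_inl : (myc G).Adj (Sum.inl a) (Sum.inl b) ↔ G.Adj a b := by
  simpa [myc, G.adj_comm b a] using fun h : G.Adj a b => h.ne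

@[simp] lemma myc_adj_inl_inr_inl : (myc G).Adj (Sum.inl a) (Sum.inr (Sum.inl b)) ↔ G.Adj a b := by
  simp [myc]

@[simp] lemma myc_adj_inr_inl_inl : (myc G).Adj (Sum.inr (Sum.inl a)) (Sum.inl b) ↔ G.Adj a b := by
  simp [myc, G.adj_comm b a]

@[simp] lemma myc_adj_inr_inl_inr_inr {w : PUnit} :
    (myc G).Adj (Sum.inr (Sum.inl a)) (Sum.inr (Sum.inr w)) := by
  simp [myc]

end Mycielskian

section MycStar

variable {m : ℕ}

@[simp] lemma starGraph_adj {a b : Fin (m + 1)} :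
    (_root_.starGraph m).Adj a b ↔ a ≠ b ∧ (a = 0 ∨ b = 0) := by
  simp [_root_.starGraph]

lemma myc_starGraph_adj_induction
    {P : Fin (m + 1) ⊕ Fin (m + 1) ⊕ PUnit → Fin (m + 1) ⊕ Fin (m + 1) ⊕ PUnit → Prop}
    (hP : ∀ x y, P x y → P y x)
    (hvv : ∀ i : Fin m, P (Sum.inl i.succ) (Sum.inl 0))
    (hvu : ∀ i : Fin m, P (Sum.inl i.succ) (Sum.inr (Sum.inl 0)))
    (huv : ∀ i : Fin m, P (Sum.inr (Sum.inl i.succ)) (Sum.inl 0))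
    (huw : ∀ a, P (Sum.inr (Sum.inl a)) (Sum.inr (Sum.inr PUnit.unit)))
    {x y} (h : (myc (_root_.starGraph m)).Adj x y) : P x y := by
  rcases x with a | a | ⟨⟩ <;> rcases y with b | b | ⟨⟩ <;>
    try (cases a using Fin.cases) <;> try (cases b using Fin.cases)
  all_goals simp [myc] at h
  all_goals first
    | exact hvv _ | exact hP _ _ (hvv _) | exact hvu _ | exact hP _ _ (hvu _)
    | exact huv _ | exact hP _ _ (huv _) | exact huw _ | exact hP _ _ (huw _)

lemma myc_starGraph_exists_two_neighbors (hm : m ≠ 0) (v : Fin (m + 1) ⊕ Fin (m + 1) ⊕ PUnit) :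
    ∃ x y, x ≠ y ∧ (myc (_root_.starGraph m)).Adj v x ∧ (myc (_root_.starGraph m)).Adj v y := by
  rcases v with a | a | ⟨⟩
  · cases a using Fin.cases
    · exact ⟨Sum.inl (Fin.last m), Sum.inr (Sum.inl (Fin.last m)), by simp [hm]⟩
    · exact ⟨Sum.inl 0, Sum.inr (Sum.inl 0), by simp⟩
  · cases a using Fin.cases
    · exact ⟨Sum.inl (Fin.last m), Sum.inr (Sum.inr PUnit.unit), by simp [hm]⟩
    · exact ⟨Sum.inl 0, Sum.inr (Sum.inr PUnit.unit), by simp⟩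
  · exact ⟨Sum.inr (Sum.inl 0), Sum.inr (Sum.inl (Fin.last m)), by simp [myc, hm]⟩

variable {C : Type*} (c : (myc (_root_.starGraph m)).edgeSet → C)

def leafColors (i : Fin m) : C × C :=
  (c ⟨s(Sum.inl i.succ, Sum.inl 0), by simp⟩,
    c ⟨s(Sum.inl i.succ, Sum.inr (Sum.inl 0)), by simp⟩)

def shadowColors (i : Fin m) : C × C :=
  (c ⟨s(Sum.inr (Sum.inl i.succ), Sum.inl 0), by simp⟩,
    c ⟨s(Sum.inr (Sum.inl i.succ), Sum.inr (Sum.inr PUnit.unit)), by simp⟩)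

variable {c}

lemma IsDistEdgeColoring.leafColors_injective
    (hc : IsDistEdgeColoring (myc (_root_.starGraph m)) c) : Function.Injective (leafColors c) :=
  hc.injective_colorPair (f := fun i : Fin m => Sum.inl i.succ)
    (Sum.inl_injective.comp (Fin.succ_injective m)) _ _ fun i z h => by
      rcases z with b | b | ⟨⟩ <;> try cases b using Fin.cases
      all_goals simp_all [myc]

lemma IsDistEdgeColoring.shadowColors_injective
    (hc : IsDistEdgeColoring (myc (_root_.starGraph m)) c) : Function.Injective (shadowColors c) :=
  hc.injective_colorPair (f := fun i : Fin m => Sum.inr (Sum.inl i.succ))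
    ((Sum.inr_injective.comp Sum.inl_injective).comp (Fin.succ_injective m)) _ _ fun i z h => by
      rcases z with b | b | ⟨⟩ <;> try cases b using Fin.cases
      all_goals simp_all [myc]

def mycStarCross (σ : Equiv.Perm (Fin m)) :
    Fin (m + 1) ⊕ Fin (m + 1) ⊕ PUnit.{1} → Fin (m + 1) ⊕ Fin (m + 1) ⊕ PUnit.{1}
  | Sum.inl a => Fin.cases (Sum.inl 0) (fun i => Sum.inr (Sum.inl (σ i).succ)) a
  | Sum.inr (Sum.inl a) =>
      Fin.cases (Sum.inr (Sum.inr PUnit.unit)) (fun i => Sum.inl (σ.symm i).succ) a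
  | Sum.inr (Sum.inr _) => Sum.inr (Sum.inl 0)

lemma mycStarCross_involutive (σ : Equiv.Perm (Fin m)) :
    Function.Involutive (mycStarCross σ) := by
  rintro (a | a | ⟨⟩) <;> try cases a using Fin.cases
  all_goals simp [mycStarCross]

lemma IsDistEdgeColoring.shadowColors_comp_ne
    (hc : IsDistEdgeColoring (myc (_root_.starGraph m)) c) (σ : Equiv.Perm (Fin m)) :
    shadowColors c ∘ σ ≠ leafColors c := by
  intro hσ
  have hleaf : ∀ i, shadowColors c (σ i) = leafColors c i := congrFun hσ
  have hshadow : ∀ i, shadowColors c i = leafColors c (σ.symm i) := fun i => by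
    simpa using hleaf (σ.symm i)
  suffices hpres : ∀ x y, (myc (_root_.starGraph m)).Adj x y →
      edgeColor c (mycStarCross σ x) (mycStarCross σ y) = edgeColor c x y by
    simpa [mycStarCross] using
      hc.apply_eq_of_involutive (mycStarCross_involutive σ) hpres (Sum.inr (Sum.inr PUnit.unit))
  refine fun x y => myc_starGraph_adj_induction
    (P := fun x y => edgeColor c (mycStarCross σ x) (mycStarCross σ y) = edgeColor c x y)
    (fun x y h => by rwa [edgeColor_comm, edgeColor_comm y]) ?_ ?_ ?_ ?_
  · intro i
    simpa [mycStarCross, edgeColor_of_adj, leafColors, shadowColors] using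
      congrArg Prod.fst (hleaf i)
  · intro i
    simpa [mycStarCross, edgeColor_of_adj, leafColors, shadowColors] using
      congrArg Prod.snd (hleaf i)
  · intro i
    simpa [mycStarCross, edgeColor_of_adj, leafColors, shadowColors] using
      congrArg Prod.fst (hshadow i).symm
  · intro a
    cases a using Fin.cases with
    | zero => exact edgeColor_comm _ _
    | succ i =>
      simpa [mycStarCross, edgeColor_of_adj, leafColors, shadowColors] using
        congrArg Prod.snd (hshadow i).symm

lemma IsDistEdgeColoring.lt_card_sq_of_myc_starGraph [Fintype C]
    (hc : IsDistEdgeColoring (myc (_root_.starGraph m)) c) : m < Fintype.card C ^ 2 := by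
  have hleaf := hc.leafColors_injective
  have hshadow := hc.shadowColors_injective
  have hle : m ≤ Fintype.card C ^ 2 := by
    simpa [sq] using Fintype.card_le_of_injective _ hleaf
  refine hle.lt_of_ne fun heq => ?_
  have hcard : Fintype.card (Fin m) = Fintype.card (C × C) := by simp [heq, sq]
  let leafEquiv :=
    Equiv.ofBijective _ ((Fintype.bijective_iff_injective_and_card _).2 ⟨hleaf, hcard⟩)
  let shadowEquiv :=
    Equiv.ofBijective _ ((Fintype.bijective_iff_injective_and_card _).2 ⟨hshadow, hcard⟩)
  exact hc.shadowColors_comp_ne (leafEquiv.trans shadowEquiv.symm)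
    (funext fun i => shadowEquiv.apply_symm_apply (leafEquiv i))

end MycStar

theorem distIndex_myc_star_ge (m : ℕ) (hm : 2 ≤ m) :
    sInf {r : ℕ | m + 1 ≤ r ^ 2} ≤ distIndex (myc (_root_.starGraph m)) := by
  obtain ⟨c, hc⟩ := exists_isDistEdgeColoring_distIndex
    (myc_starGraph_exists_two_neighbors (m := m) (by omega))
  exact Nat.sInf_le (by simpa using hc.lt_card_sq_of_myc_starGraph)
end

section
/- Let G be a finite simple graph with no connected component isomorphic to K₂, at most one isolated vertex, and such that G is not isomorphic to K_{1,m} for any m. Then Dist′(μ(G)) ≤ Dist′(G). -/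
open SimpleGraph

universe u

/-!
Write `v_i, u_i, w` (`Myc.orig`, `Myc.shadow`, `Myc.root`) for the vertices of `μ(G)`.
A distinguishing colouring `c` of `G` extends to `μ(G)` by giving `v_i v_j` and `v_i u_j` the
colour of `v_i v_j` and every edge at `w` one fixed colour. The point is that every automorphism
`φ` of `μ(G)` fixes `w`. If `φ w = u_x`, comparing degrees makes `x` adjacent to all other
vertices, and the neighbours of `u_x`, being images of the independent set of shadows, are
independent, so `G` is a star. If `φ w` is an original vertex, then so is the preimage `v_q` of
`w`; its neighbours go to shadows, which forces `φ u_q = v_c` with `deg c ≤ 1`, hence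
`deg q = 1` and `|V| = 2`, so `G = K₂`.
Once `w` is fixed, `φ` permutes the original vertices by a colour-preserving automorphism of `G`,
hence trivially, and then moves each `u_b` to some `u_b'` with `N(b') = N(b)` and matching
colours, which is again a colour-preserving automorphism of `G`.
-/

section General

variable {V : Type*} {G : SimpleGraph V}

lemma SimpleGraph.Iso.ncard_neighborSet_apply {W : Type*} {H : SimpleGraph W} (φ : G ≃g H)
    (v : V) : (H.neighborSet (φ v)).ncard = (G.neighborSet v).ncard := by
  simp only [← Nat.card_coe_set_eq]
  exact (Nat.card_congr (φ.mapNeighborSet v)).symm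

lemma SimpleGraph.ncard_neighborSet_eq_degree (v : V) [Fintype (G.neighborSet v)] :
    (G.neighborSet v).ncard = G.degree v := by
  rw [Set.ncard_eq_toFinset_card']
  rfl

lemma SimpleGraph.exists_starGraph_iso_fin [Fintype V] (x : V) :
    ∃ m, Nonempty (SimpleGraph.starGraph x ≃g _root_.starGraph m) := by
  obtain ⟨m, hm⟩ := Nat.exists_eq_succ_of_ne_zero (Fintype.card_pos_iff.2 ⟨x⟩).ne'
  let e₀ := Fintype.equivFinOfCardEq hm
  let e := e₀.trans (Equiv.swap (e₀ x) 0)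
  have hex : e x = 0 := by simp [e]
  refine ⟨m, ⟨e, fun {a b} => ?_⟩⟩
  change (SimpleGraph.starGraph (0 : Fin (m + 1))).Adj _ _ ↔ _
  simp only [SimpleGraph.starGraph_adj, ← hex, e.injective.ne_iff, e.injective.eq_iff]

lemma exists_perm_of_apply_mem_range {α β : Type*} [Finite α] {f : β → β} (hf : f.Injective)
    {i : α → β} (hi : i.Injective) (h : ∀ a, f (i a) ∈ Set.range i) :
    ∃ σ : α ≃ α, ∀ a, f (i a) = i (σ a) := by
  choose σ hσ using h
  have hσ_inj : σ.Injective := fun a b hab => hi (hf (by rw [← hσ, ← hσ, hab]))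
  exact ⟨Equiv.ofBijective σ (Finite.injective_iff_bijective.1 hσ_inj), fun a => (hσ a).symm⟩

lemma forall_apply_mapEdgeSet_eq_iff {C : Type*} (c : G.edgeSet → C) (φ : G ≃g G) :
    (∀ e, c (φ.mapEdgeSet e) = c e) ↔
      ∀ a b (h : G.Adj a b), c ⟨s(φ a, φ b), φ.map_adj_iff.2 h⟩ = c ⟨s(a, b), h⟩ := by
  refine ⟨fun h a b hab => h ⟨s(a, b), hab⟩, fun h => ?_⟩
  rintro ⟨e, he⟩
  induction e using Sym2.ind with
  | _ a b => exact h a b he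

lemma isDistEdgeColoring_iff {C : Type*} {c : G.edgeSet → C} :
    IsDistEdgeColoring G c ↔ ∀ φ : G ≃g G,
      (∀ a b (h : G.Adj a b), c ⟨s(φ a, φ b), φ.map_adj_iff.2 h⟩ = c ⟨s(a, b), h⟩) →
        ∀ v, φ v = v :=
  forall_congr' fun φ => imp_congr_left (forall_apply_mapEdgeSet_eq_iff c φ)

lemma isDistEdgeColoring_of_injective_s7 [Fintype V] [DecidableRel G.Adj]
    (hK2 : ∀ x y : V, G.Adj x y → ¬(G.degree x = 1 ∧ G.degree y = 1))
    (hiso : ∀ x y : V, G.degree x = 0 → G.degree y = 0 → x = y) {C : Type*}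
    {c : G.edgeSet → C} (hc : c.Injective) : IsDistEdgeColoring G c := by
  rw [isDistEdgeColoring_iff]
  intro φ hφ v
  by_contra hv
  -- `φ` fixes every edge `vb`, so it swaps its ends
  have hnbr : ∀ b, G.Adj v b → φ v = b ∧ φ b = v := fun b hb => by
    simpa [hv] using congrArg Subtype.val (hc (hφ v b hb))
  have hdeg : G.degree v ≤ 1 := Finset.card_le_one.2 fun a ha b hb => by
    rw [← (hnbr a ((G.mem_neighborFinset v a).1 ha)).1,
      (hnbr b ((G.mem_neighborFinset v b).1 hb)).1]
  obtain hdeg0 | hdeg1 : G.degree v = 0 ∨ G.degree v = 1 := by omega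
  · exact hv (hiso _ _ (by rw [φ.degree_eq, hdeg0]) hdeg0)
  · obtain ⟨b, hb⟩ := (G.degree_pos_iff_exists_adj v).1 (by omega)
    obtain ⟨rfl, -⟩ := hnbr b hb
    exact hK2 v _ hb ⟨hdeg1, by rw [φ.degree_eq, hdeg1]⟩

lemma IsDistEdgeColoring.distIndex_le {k : ℕ} {c : G.edgeSet → Fin k}
    (hc : IsDistEdgeColoring G c) : distIndex G ≤ k :=
  Nat.sInf_le ⟨c, hc⟩

lemma IsDistEdgeColoring.exists_fin_distIndex {k : ℕ} {c : G.edgeSet → Fin k}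
    (hc : IsDistEdgeColoring G c) :
    ∃ c : G.edgeSet → Fin (distIndex G), IsDistEdgeColoring G c :=
  Nat.sInf_mem (s := {k | ∃ c : G.edgeSet → Fin k, IsDistEdgeColoring G c}) ⟨k, c, hc⟩

lemma distIndex_eq_zero_of_subsingleton [Subsingleton V] (G : SimpleGraph V) :
    distIndex G = 0 :=
  Nat.eq_zero_of_le_zero <| IsDistEdgeColoring.distIndex_le
    (c := fun ⟨e, he⟩ => absurd he <| by
      induction e using Sym2.ind with
      | _ a b => exact fun h => h.ne (Subsingleton.elim a b))
    fun _ _ _ => Subsingleton.elim _ _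

lemma nonempty_edgeSet_of_not_star [Fintype V] [Nonempty V] [DecidableRel G.Adj]
    (hiso : ∀ x y : V, G.degree x = 0 → G.degree y = 0 → x = y)
    (hstar : ∀ m : ℕ, IsEmpty (G ≃g _root_.starGraph m)) : Nonempty G.edgeSet := by
  by_contra! hG
  have hisol : ∀ x, G.degree x = 0 := fun x =>
    (G.degree_eq_zero x).2 fun y hxy => hG.false ⟨s(x, y), hxy⟩
  have : Subsingleton V := ⟨fun x y => hiso x y (hisol x) (hisol y)⟩
  obtain ⟨x⟩ := ‹Nonempty V›
  have hG : G = SimpleGraph.starGraph x := by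
    ext a b
    simp [Subsingleton.elim a b]
  obtain ⟨m, ⟨e⟩⟩ := exists_starGraph_iso_fin x
  exact (hstar m).false (hG ▸ e)

end General

namespace Myc

variable {V : Type u} {G : SimpleGraph V}

abbrev orig (a : V) : V ⊕ V ⊕ PUnit.{u+1} := Sum.inl a
abbrev shadow (a : V) : V ⊕ V ⊕ PUnit.{u+1} := Sum.inr (Sum.inl a)
abbrev root (V : Type u) : V ⊕ V ⊕ PUnit.{u+1} := Sum.inr (Sum.inr PUnit.unit)

@[simp] lemma adj_orig_orig {a b : V} : (myc G).Adj (orig a) (orig b) ↔ G.Adj a b := by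
  simpa [myc, G.adj_comm] using fun h : G.Adj a b => h.ne

@[simp] lemma adj_orig_shadow {a b : V} : (myc G).Adj (orig a) (shadow b) ↔ G.Adj a b := by
  simp [myc]

@[simp] lemma adj_shadow_orig {a b : V} : (myc G).Adj (shadow a) (orig b) ↔ G.Adj a b := by
  simp [myc, G.adj_comm]

@[simp] lemma not_adj_shadow_shadow {a b : V} : ¬ (myc G).Adj (shadow a) (shadow b) := by
  simp [myc]

@[simp] lemma adj_shadow_root {a : V} : (myc G).Adj (shadow a) (root V) := by
  simp [myc]

@[simp] lemma adj_root_shadow {a : V} : (myc G).Adj (root V) (shadow a) := by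
  simp [myc]

@[simp] lemma not_adj_orig_root {a : V} : ¬ (myc G).Adj (orig a) (root V) := by
  simp [myc]

@[simp] lemma not_adj_root_orig {a : V} : ¬ (myc G).Adj (root V) (orig a) := by
  simp [myc]

lemma eq_orig_or_eq_shadow_or_eq_root (z : V ⊕ V ⊕ PUnit.{u+1}) :
    (∃ a, z = orig a) ∨ (∃ a, z = shadow a) ∨ z = root V := by
  rcases z with a | a | ⟨⟨⟩⟩ <;> simp

lemma shadow_injective : Function.Injective (shadow : V → V ⊕ V ⊕ PUnit.{u+1}) :=
  Sum.inr_injective.comp Sum.inl_injective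

lemma neighborSet_root : (myc G).neighborSet (root V) = Set.range shadow := by
  ext x
  rcases x with a | a | ⟨⟨⟩⟩ <;> simp

lemma neighborSet_orig (q : V) :
    (myc G).neighborSet (orig q) = orig '' G.neighborSet q ∪ shadow '' G.neighborSet q := by
  ext x
  rcases x with a | a | ⟨⟨⟩⟩ <;> simp

lemma neighborSet_shadow (x : V) :
    (myc G).neighborSet (shadow x) = insert (root V) (orig '' G.neighborSet x) := by
  ext x
  rcases x with a | a | ⟨⟨⟩⟩ <;> simp

lemma eq_shadow_of_adj_root {z : V ⊕ V ⊕ PUnit.{u+1}} (h : (myc G).Adj z (root V)) :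
    ∃ a, z = shadow a := by
  have hz : z ∈ (myc G).neighborSet (root V) := h.symm
  rw [neighborSet_root] at hz
  exact hz.imp fun _ ha => ha.symm

lemma exists_map_shadow_eq_of_adj (φ : myc G ≃g myc G) {y : V ⊕ V ⊕ PUnit.{u+1}}
    (h : (myc G).Adj (φ (root V)) y) : ∃ a, φ (shadow a) = y := by
  have := φ.symm.map_adj_iff.2 h.symm
  rw [φ.symm_apply_apply] at this
  obtain ⟨a, ha⟩ := eq_shadow_of_adj_root this
  exact ⟨a, by rw [← ha, φ.apply_symm_apply]⟩

lemma ncard_neighborSet_root : ((myc G).neighborSet (root V)).ncard = Nat.card V := by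
  rw [neighborSet_root, Set.ncard_range_of_injective shadow_injective]

lemma ncard_neighborSet_orig [Finite V] (q : V) :
    ((myc G).neighborSet (orig q)).ncard = 2 * (G.neighborSet q).ncard := by
  rw [neighborSet_orig, Set.ncard_union_eq (by simp [Set.disjoint_left]),
    Set.ncard_image_of_injective _ Sum.inl_injective,
    Set.ncard_image_of_injective _ shadow_injective, two_mul]

lemma ncard_neighborSet_shadow [Finite V] (x : V) :
    ((myc G).neighborSet (shadow x)).ncard = (G.neighborSet x).ncard + 1 := by
  rw [neighborSet_shadow, Set.ncard_insert_of_notMem (by simp),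
    Set.ncard_image_of_injective _ Sum.inl_injective]

section RootFixed

variable [Fintype V] [DecidableRel G.Adj]

lemma map_root_ne_shadow (hstar : ∀ m : ℕ, IsEmpty (G ≃g _root_.starGraph m))
    (φ : myc G ≃g myc G) (x : V) : φ (root V) ≠ shadow x := by
  intro hx
  have hdeg : G.degree x = Fintype.card V - 1 := by
    have := φ.ncard_neighborSet_apply (root V)
    rw [hx, ncard_neighborSet_shadow, ncard_neighborSet_root, ncard_neighborSet_eq_degree,
      Nat.card_eq_fintype_card] at this
    omega
  have hx_univ := (G.degree_eq_card_sub_one x).1 hdeg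
  have hind : ∀ a b, G.Adj x a → G.Adj x b → ¬ G.Adj a b := by
    intro a b ha hb hab
    obtain ⟨a', ha'⟩ := exists_map_shadow_eq_of_adj φ (y := orig a) (by simpa [hx] using ha)
    obtain ⟨b', hb'⟩ := exists_map_shadow_eq_of_adj φ (y := orig b) (by simpa [hx] using hb)
    have : (myc G).Adj (φ (shadow a')) (φ (shadow b')) := by rwa [ha', hb', adj_orig_orig]
    exact not_adj_shadow_shadow (φ.map_adj_iff.1 this)
  have hG : G = SimpleGraph.starGraph x := by
    ext a b
    refine ⟨fun hab => ⟨hab.ne, ?_⟩, ?_⟩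
    · by_contra! hne
      exact hind a b (hx_univ (Ne.symm hne.1)) (hx_univ (Ne.symm hne.2)) hab
    · rintro ⟨hne, rfl | rfl⟩
      · exact hx_univ hne
      · exact (hx_univ hne.symm).symm
  obtain ⟨m, ⟨e⟩⟩ := exists_starGraph_iso_fin x
  exact (hstar m).false (hG ▸ e)

lemma degree_le_one_of_map_orig_eq_root {φ : myc G ≃g myc G} {p q c : V}
    (hq : φ (orig q) = root V) (hp : φ (root V) = orig p) (hc : φ (shadow q) = orig c) :
    G.degree c ≤ 1 := by
  suffices hc_nbr : ∀ c', G.Adj c c' → c' = p from Finset.card_le_one.2 fun a ha b hb => by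
    rw [hc_nbr a ((G.mem_neighborFinset c a).1 ha), hc_nbr b ((G.mem_neighborFinset c b).1 hb)]
  intro c' hcc'
  have hadj := φ.symm.map_adj_iff.2 (adj_orig_orig.2 hcc')
  rw [← hc, φ.symm_apply_apply] at hadj
  obtain ⟨b, hb⟩ | ⟨b, hb⟩ | hroot := eq_orig_or_eq_shadow_or_eq_root (φ.symm (orig c'))
  · rw [hb, adj_shadow_orig] at hadj
    obtain ⟨b', hb'⟩ := eq_shadow_of_adj_root (hq ▸ φ.map_adj_iff.2 (adj_orig_orig.2 hadj.symm))
    rw [← hb, φ.apply_symm_apply] at hb'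
    simp at hb'
  · rw [hb] at hadj
    exact absurd hadj not_adj_shadow_shadow
  · rw [φ.symm_apply_eq, hp] at hroot
    exact Sum.inl_injective hroot

lemma map_orig_ne_root (hK2 : ∀ x y : V, G.Adj x y → ¬(G.degree x = 1 ∧ G.degree y = 1))
    (hstar : ∀ m : ℕ, IsEmpty (G ≃g _root_.starGraph m))
    (φ : myc G ≃g myc G) (q : V) : φ (orig q) ≠ root V := by
  intro hq
  obtain ⟨p, hp⟩ : ∃ p, φ (root V) = orig p := by
    obtain hp | ⟨x, hx⟩ | hroot := eq_orig_or_eq_shadow_or_eq_root (φ (root V))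
    · exact hp
    · exact absurd hx (map_root_ne_shadow hstar φ x)
    · exact absurd (φ.injective (hq.trans hroot.symm)) (by simp)
  have hcard : Fintype.card V = 2 * G.degree q := by
    have := φ.ncard_neighborSet_apply (orig q)
    rwa [hq, ncard_neighborSet_root, ncard_neighborSet_orig, ncard_neighborSet_eq_degree,
      Nat.card_eq_fintype_card] at this
  obtain ⟨b₀, hb₀⟩ : ∃ b₀, G.Adj q b₀ :=
    (G.degree_pos_iff_exists_adj q).1 (by have := Fintype.card_pos_iff.2 ⟨q⟩; omega)
  -- `φ (shadow q)` is adjacent to `φ (orig b₀)`, a neighbour of the root, so it is not a shadow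
  obtain ⟨c, hc⟩ : ∃ c, φ (shadow q) = orig c := by
    obtain hc | ⟨x, hx⟩ | hroot := eq_orig_or_eq_shadow_or_eq_root (φ (shadow q))
    · exact hc
    · obtain ⟨b', hb'⟩ := eq_shadow_of_adj_root (hq ▸ φ.map_adj_iff.2 (adj_orig_orig.2 hb₀.symm))
      have := φ.map_adj_iff.2 (adj_shadow_orig.2 hb₀)
      rw [hx, hb'] at this
      exact absurd this not_adj_shadow_shadow
    · exact absurd (φ.injective (hroot.trans hq.symm)) (by simp)
  have hdeg_q : G.degree q + 1 = 2 * G.degree c := by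
    have := φ.ncard_neighborSet_apply (shadow q)
    rwa [hc, ncard_neighborSet_orig, ncard_neighborSet_shadow, ncard_neighborSet_eq_degree,
      ncard_neighborSet_eq_degree, eq_comm] at this
  have hdeg_c := degree_le_one_of_map_orig_eq_root hq hp hc
  have hdeg_b₀ : G.degree b₀ = 1 := by
    have h1 := (G.degree_pos_iff_exists_adj b₀).2 ⟨q, hb₀.symm⟩
    have h2 := G.degree_lt_card_verts b₀
    omega
  exact hK2 q b₀ hb₀ ⟨by omega, hdeg_b₀⟩

lemma map_root_eq_root (hK2 : ∀ x y : V, G.Adj x y → ¬(G.degree x = 1 ∧ G.degree y = 1))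
    (hstar : ∀ m : ℕ, IsEmpty (G ≃g _root_.starGraph m)) (φ : myc G ≃g myc G) :
    φ (root V) = root V := by
  obtain ⟨p, hp⟩ | ⟨x, hx⟩ | hroot := eq_orig_or_eq_shadow_or_eq_root (φ (root V))
  · exact absurd (by rw [← hp, φ.symm_apply_apply]) (map_orig_ne_root hK2 hstar φ.symm p)
  · exact absurd hx (map_root_ne_shadow hstar φ x)
  · exact hroot

end RootFixed

lemma exists_perm_map_orig [Finite V] (φ : myc G ≃g myc G) (hroot : φ (root V) = root V) :
    ∃ σ : V ≃ V, ∀ a, φ (orig a) = orig (σ a) :=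
  exists_perm_of_apply_mem_range φ.injective Sum.inl_injective fun a => by
    obtain ⟨b, hb⟩ | ⟨b, hb⟩ | hb := eq_orig_or_eq_shadow_or_eq_root (φ (orig a))
    · exact ⟨b, hb.symm⟩
    · have := φ.map_adj_iff.1 (hb ▸ hroot ▸ adj_shadow_root (G := G) (a := b))
      exact absurd this not_adj_orig_root
    · exact absurd (φ.injective (hb.trans hroot.symm)) (by simp)

lemma exists_perm_map_shadow [Finite V] (φ : myc G ≃g myc G) (hroot : φ (root V) = root V) :
    ∃ τ : V ≃ V, ∀ a, φ (shadow a) = shadow (τ a) :=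
  exists_perm_of_apply_mem_range φ.injective shadow_injective fun a => by
    obtain ⟨b, hb⟩ := eq_shadow_of_adj_root (hroot ▸ φ.map_adj_iff.2 (adj_shadow_root (a := a)))
    exact ⟨b, hb.symm⟩

def proj : V ⊕ V ⊕ PUnit.{u+1} → Option V :=
  Sum.elim some (Sum.elim some fun _ => none)

/-- An edge gets the colour under `c` of its image under `proj` if that is an edge of `G`
(so `orig a — shadow b` is coloured like `ab`), and `c₀` if it is incident to the root. -/
noncomputable def coloring {C : Type*} (c : G.edgeSet → C) (c₀ : C) (e : (myc G).edgeSet) : C :=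
  Function.extend (fun e : G.edgeSet => (e : Sym2 V).map some) c (fun _ => c₀)
    ((e : Sym2 _).map proj)

lemma coloring_mk {C : Type*} (c : G.edgeSet → C) (c₀ : C) {x y : V ⊕ V ⊕ PUnit.{u+1}}
    (h : (myc G).Adj x y) {a b : V} (hab : G.Adj a b) (hx : proj x = some a)
    (hy : proj y = some b) : coloring c c₀ ⟨s(x, y), h⟩ = c ⟨s(a, b), hab⟩ := by
  have hinj : (fun e : G.edgeSet => (e : Sym2 V).map some).Injective :=
    (Sym2.map.injective (Option.some_injective V)).comp Subtype.val_injective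
  change Function.extend _ c _ s(proj x, proj y) = _
  rw [hx, hy]
  exact hinj.extend_apply c _ ⟨s(a, b), hab⟩

section Coloring

variable [Finite V] {C : Type*} {c : G.edgeSet → C} {c₀ : C} {φ : myc G ≃g myc G}

lemma map_orig_eq_orig (hc : IsDistEdgeColoring G c)
    (hφ : ∀ e, coloring c c₀ (φ.mapEdgeSet e) = coloring c c₀ e) (hroot : φ (root V) = root V)
    (a : V) : φ (orig a) = orig a := by
  rw [forall_apply_mapEdgeSet_eq_iff] at hφ
  obtain ⟨σ, hσ⟩ := exists_perm_map_orig φ hroot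
  let σG : G ≃g G := ⟨σ, fun {a b} => by
    rw [← adj_orig_orig (G := G), ← hσ, ← hσ, φ.map_adj_iff, adj_orig_orig]⟩
  suffices σ a = a by rw [hσ, this]
  refine (isDistEdgeColoring_iff.1 hc) σG (fun a b hab => ?_) a
  have hab' := adj_orig_orig.2 hab
  calc _ = coloring c c₀ ⟨s(φ (orig a), φ (orig b)), φ.map_adj_iff.2 hab'⟩ :=
        (coloring_mk c c₀ _ _ (by rw [hσ]; rfl) (by rw [hσ]; rfl)).symm
    _ = _ := hφ _ _ hab'
    _ = _ := coloring_mk c c₀ _ hab rfl rfl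

lemma map_shadow_eq_shadow (hc : IsDistEdgeColoring G c)
    (hφ : ∀ e, coloring c c₀ (φ.mapEdgeSet e) = coloring c c₀ e) (hroot : φ (root V) = root V)
    (a : V) : φ (shadow a) = shadow a := by
  have horig := map_orig_eq_orig hc hφ hroot
  rw [forall_apply_mapEdgeSet_eq_iff] at hφ
  obtain ⟨τ, hτ⟩ := exists_perm_map_shadow φ hroot
  have hτ_adj : ∀ a b, G.Adj a (τ b) ↔ G.Adj a b := fun a b => by
    have := φ.map_adj_iff (v := orig a) (w := shadow b)
    rwa [horig, hτ, adj_orig_shadow, adj_orig_shadow] at this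
  have hτ_color : ∀ a b (h : G.Adj a b), c ⟨s(a, τ b), (hτ_adj a b).2 h⟩ = c ⟨s(a, b), h⟩ := by
    intro a b hab
    have hab' := adj_orig_shadow.2 hab
    calc _ = coloring c c₀ ⟨s(φ (orig a), φ (shadow b)), φ.map_adj_iff.2 hab'⟩ :=
          (coloring_mk c c₀ _ _ (by rw [horig]; rfl) (by rw [hτ]; rfl)).symm
      _ = _ := hφ _ _ hab'
      _ = _ := coloring_mk c c₀ _ hab rfl rfl
  -- `τ` only moves vertices to twins, so it is an automorphism of `G`
  let τG : G ≃g G := ⟨τ, fun {a b} => by rw [hτ_adj, G.adj_comm, hτ_adj, G.adj_comm]⟩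
  suffices τ a = a by rw [hτ, this]
  refine (isDistEdgeColoring_iff.1 hc) τG (fun a b hab => ?_) a
  have h1 : G.Adj (τ a) b := ((hτ_adj b a).2 hab.symm).symm
  calc _ = c ⟨s(τ a, b), h1⟩ := hτ_color (τ a) b h1
    _ = c ⟨s(b, τ a), h1.symm⟩ := congrArg c (Subtype.ext Sym2.eq_swap)
    _ = c ⟨s(b, a), hab.symm⟩ := hτ_color b a hab.symm
    _ = c ⟨s(a, b), hab⟩ := congrArg c (Subtype.ext Sym2.eq_swap)

end Coloring

end Myc

open Myc in
theorem IsDistEdgeColoring.myc {V : Type u} [Fintype V] {G : SimpleGraph V} [DecidableRel G.Adj]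
    (hK2 : ∀ x y : V, G.Adj x y → ¬(G.degree x = 1 ∧ G.degree y = 1))
    (hstar : ∀ m : ℕ, IsEmpty (G ≃g _root_.starGraph m)) {C : Type*} {c : G.edgeSet → C}
    (hc : IsDistEdgeColoring G c) (c₀ : C) : IsDistEdgeColoring (myc G) (coloring c c₀) := by
  intro φ hφ
  have hroot := map_root_eq_root hK2 hstar φ
  rintro (a | a | ⟨⟨⟩⟩)
  · exact map_orig_eq_orig hc hφ hroot a
  · exact map_shadow_eq_shadow hc hφ hroot a
  · exact hroot

theorem distIndex_myc_le_of_not_star {V : Type u} [Fintype V] (G : SimpleGraph V)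
    [DecidableRel G.Adj]
    (hK2 : ∀ x y : V, G.Adj x y → ¬(G.degree x = 1 ∧ G.degree y = 1))
    (hiso : ∀ x y : V, G.degree x = 0 → G.degree y = 0 → x = y)
    (hstar : ∀ m : ℕ, IsEmpty (G ≃g _root_.starGraph m)) :
    distIndex (myc G) ≤ distIndex G := by
  classical
  rcases isEmpty_or_nonempty V with hV | hV
  · have : Subsingleton (V ⊕ V ⊕ PUnit.{u+1}) :=
      ⟨by rintro (a | a | ⟨⟨⟩⟩) (b | b | ⟨⟨⟩⟩) <;> first | rfl | exact isEmptyElim ‹_›⟩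
    simp [distIndex_eq_zero_of_subsingleton]
  · obtain ⟨c, hc⟩ := IsDistEdgeColoring.exists_fin_distIndex
      (isDistEdgeColoring_of_injective_s7 hK2 hiso (Fintype.equivFin G.edgeSet).injective)
    obtain ⟨e⟩ := nonempty_edgeSet_of_not_star hiso hstar
    exact (hc.myc hK2 hstar (c e)).distIndex_le
end

section
/- For m ≥ 2 and t ≥ 1, the distinguishing index of the generalized Mycielskian of the star satisfies Dist′(μ_t(K_{1,m})) ≤ r, where r is the minimum natural number such that r² ≥ m + 1. -/
open SimpleGraph

universe u

/-!
The vertices with at most two neighbours are exactly the leaves, so an automorphism permutes the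
leaves, and it maps the only adjacent pair of non-leaves, the top hub and the root, to itself.
Every leaf gets a code below `r ^ 2`, and the two base-`r` digits of the code label its upward and
its downward edge. If a colour-preserving automorphism exchanged the root and the top hub, it would
send the top leaf with code `m` to a leaf one level lower with the same code, and lower leaves only
have codes `< m`. Hence the root is fixed, so distances to the root, i.e. levels, are preserved;
this fixes every hub, and then the two digits fix every leaf.
-/

namespace SimpleGraph

variable {V W : Type*} {G : SimpleGraph V} {G' : SimpleGraph W}

theorem Hom.edist_le (f : G →g G') (u v : V) : G'.edist (f u) (f v) ≤ G.edist u v := by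
  by_cases h : G.Reachable u v
  · obtain ⟨p, hp⟩ := h.exists_walk_length_eq_edist
    simpa [hp] using G'.edist_le (p.map f)
  · simp [edist_eq_top_of_not_reachable h]

theorem Iso.edist_eq (φ : G ≃g G') (u v : V) : G'.edist (φ u) (φ v) = G.edist u v :=
  le_antisymm (φ.toHom.edist_le u v) (by simpa using φ.symm.toHom.edist_le (φ u) (φ v))

theorem Iso.dist_eq (φ : G ≃g G') (u v : V) : G'.dist (φ u) (φ v) = G.dist u v := by
  rw [dist, dist, φ.edist_eq]

theorem Iso.encard_neighborSet (φ : G ≃g G') (v : V) :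
    (G'.neighborSet (φ v)).encard = (G.neighborSet v).encard := by
  rw [← φ.image_neighborSet, φ.injective.encard_image]

theorem encard_neighborSet_le_two {v a b : V} (h : ∀ x, G.Adj v x → x = a ∨ x = b) :
    (G.neighborSet v).encard ≤ 2 :=
  calc (G.neighborSet v).encard ≤ ({a, b} : Set V).encard := Set.encard_le_encard h
    _ ≤ 2 := by
      grw [Set.encard_insert_le, Set.encard_singleton]; rfl

theorem two_lt_encard_neighborSet {v x y z : V} (hx : G.Adj v x) (hy : G.Adj v y)
    (hz : G.Adj v z) (hxy : x ≠ y) (hxz : x ≠ z) (hyz : y ≠ z) :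
    2 < (G.neighborSet v).encard :=
  calc 2 < ({x, y, z} : Set V).encard := by
        rw [Set.encard_eq_three.2 ⟨x, y, z, hxy, hxz, hyz, rfl⟩]; norm_num
    _ ≤ (G.neighborSet v).encard := by
      refine Set.encard_le_encard ?_
      rintro w (rfl | rfl | rfl) <;> assumption

end SimpleGraph

namespace MycStar

abbrev Vert (m t : ℕ) := (Fin (t + 1) × Fin (m + 1)) ⊕ PUnit.{1}

abbrev graph (m t : ℕ) : SimpleGraph (Vert m t) := genMyc (_root_.starGraph m) t

variable {m t r : ℕ}

def root : Vert m t := .inr PUnit.unit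

def hub (j : Fin (t + 1)) : Vert m t := .inl (j, 0)

def IsLeaf : Vert m t → Prop
  | .inl (_, i) => i ≠ 0
  | .inr _ => False

@[simp] theorem isLeaf_inl {j : Fin (t + 1)} {i : Fin (m + 1)} : IsLeaf (.inl (j, i)) ↔ i ≠ 0 :=
  Iff.rfl

@[simp] theorem not_isLeaf_inr (u : PUnit) : ¬ IsLeaf (.inr u : Vert m t) := id

def height : Vert m t → ℕ
  | .inl (j, _) => j
  | .inr _ => t + 1

/-- For `j = 0` this is the level-`0` hub, thanks to truncated subtraction. -/
def below (j : Fin (t + 1)) : Vert m t := hub ⟨j - 1, by omega⟩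

def above (j : Fin (t + 1)) : Vert m t := if h : (j : ℕ) < t then hub ⟨j + 1, by omega⟩ else root

theorem starGraph_adj {a b : Fin (m + 1)} :
    (_root_.starGraph m).Adj a b ↔ (a = 0 ∧ b ≠ 0) ∨ (a ≠ 0 ∧ b = 0) := by
  simp only [_root_.starGraph, fromRel_adj]
  grind

theorem adj_inl_inl {j k : Fin (t + 1)} {a b : Fin (m + 1)} :
    (graph m t).Adj (.inl (j, a)) (.inl (k, b)) ↔ ((a = 0 ∧ b ≠ 0) ∨ (a ≠ 0 ∧ b = 0)) ∧
      (((j : ℕ) = 0 ∧ (k : ℕ) = 0) ∨ (k : ℕ) = j + 1 ∨ (j : ℕ) = k + 1) := by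
  simp only [graph, genMyc, fromRel_adj, starGraph_adj, ne_eq, Sum.inl.injEq, Prod.mk.injEq]
  grind

theorem adj_inl_root {j : Fin (t + 1)} {a : Fin (m + 1)} :
    (graph m t).Adj (.inl (j, a)) root ↔ (j : ℕ) = t := by
  simp [graph, genMyc, root]

theorem adj_leaf_iff {j : Fin (t + 1)} {i : Fin (m + 1)} (hi : i ≠ 0) {x : Vert m t} :
    (graph m t).Adj (.inl (j, i)) x ↔ x = below j ∨ x = above j := by
  have := j.isLt
  rcases x with ⟨k, b⟩ | ⟨⟩
  · rw [adj_inl_inl]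
    by_cases hj : (j : ℕ) < t <;>
      simp only [below, above, hub, root, hj, dite_true, dite_false, reduceCtorEq, or_false,
        Sum.inl.injEq, Prod.mk.injEq, hi, false_and, false_or, ne_eq, not_false_eq_true, true_and,
        Fin.ext_iff] <;> omega
  · rw [← root, adj_inl_root]
    by_cases hj : (j : ℕ) < t <;> simp [below, above, hub, root, hj] <;> omega

theorem above_last : above (m := m) (Fin.last t) = root := by
  simp [above]

theorem adj_below {j : Fin (t + 1)} {i : Fin (m + 1)} (hi : i ≠ 0) :
    (graph m t).Adj (.inl (j, i)) (below j) :=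
  (adj_leaf_iff hi).2 (.inl rfl)

theorem adj_above {j : Fin (t + 1)} {i : Fin (m + 1)} (hi : i ≠ 0) :
    (graph m t).Adj (.inl (j, i)) (above j) :=
  (adj_leaf_iff hi).2 (.inr rfl)

theorem not_isLeaf_below (j : Fin (t + 1)) : ¬ IsLeaf (below (m := m) j) := by
  simp [below, hub, IsLeaf]

theorem not_isLeaf_above (j : Fin (t + 1)) : ¬ IsLeaf (above (m := m) j) := by
  unfold above; split <;> simp [hub, root, IsLeaf]

theorem height_below_le (j : Fin (t + 1)) : height (below (m := m) j) ≤ j := by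
  simp [below, hub, height]

theorem lt_height_above (j : Fin (t + 1)) : (j : ℕ) < height (above (m := m) j) := by
  unfold above; split <;> simp [hub, root, height]; omega

theorem height_le (v : Vert m t) : height v ≤ t + 1 := by
  rcases v with ⟨j, _⟩ | _ <;> simp [height]

theorem eq_of_height_eq {x y : Vert m t} (hx : ¬ IsLeaf x) (hy : ¬ IsLeaf y)
    (h : height x = height y) : x = y := by
  rcases x with ⟨j, a⟩ | ⟨⟩ <;> rcases y with ⟨k, b⟩ | ⟨⟩
  · simp only [isLeaf_inl, not_not] at hx hy
    subst hx hy
    rw [Fin.ext h]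
  · exact absurd h (by simp only [height]; omega)
  · exact absurd h (by simp only [height]; omega)
  · rfl

theorem two_lt_encard_neighborSet_of_not_isLeaf (hm : 2 ≤ m) {v : Vert m t} (hv : ¬ IsLeaf v) :
    2 < ((graph m t).neighborSet v).encard := by
  let one : Fin (m + 1) := ⟨1, by omega⟩
  let two : Fin (m + 1) := ⟨2, by omega⟩
  have hne : one ≠ two := by simp [one, two, Fin.ext_iff]
  rcases v with ⟨j, a⟩ | ⟨⟩
  · obtain rfl : a = 0 := not_not.1 hv
    have hj := j.isLt
    let j' : Fin (t + 1) := ⟨j - 1, by omega⟩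
    have hadj : ∀ i : Fin (m + 1), i ≠ 0 → (graph m t).Adj (.inl (j, 0)) (.inl (j', i)) :=
      fun i hi => adj_inl_inl.2 ⟨.inl ⟨rfl, hi⟩, by simp only [j']; omega⟩
    have hone : one ≠ 0 := by simp [one, Fin.ext_iff]
    have htwo : two ≠ 0 := by simp [two, Fin.ext_iff]
    by_cases hjt : (j : ℕ) < t
    · refine SimpleGraph.two_lt_encard_neighborSet (hadj one hone) (hadj two htwo)
        (z := .inl (⟨j + 1, by omega⟩, one))
        (adj_inl_inl.2 ⟨.inl ⟨rfl, hone⟩, by simp⟩) (by simpa using hne) ?_ ?_ <;>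
      simp [j', Fin.ext_iff]
    · exact SimpleGraph.two_lt_encard_neighborSet (hadj one hone) (hadj two htwo)
        (adj_inl_root.2 (by omega)) (by simpa using hne) Sum.inl_ne_inr Sum.inl_ne_inr
  · have hadj : ∀ i : Fin (m + 1), (graph m t).Adj root (.inl (Fin.last t, i)) :=
      fun i => ((graph m t).adj_comm _ _).1 (adj_inl_root.2 rfl)
    exact SimpleGraph.two_lt_encard_neighborSet (hadj 0) (hadj one) (hadj two)
      (by simp [one, Fin.ext_iff]) (by simp [two, Fin.ext_iff]) (by simpa using hne)

theorem eq_hub_last_of_adj_of_not_isLeaf {x y : Vert m t} (h : (graph m t).Adj x y)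
    (hx : ¬ IsLeaf x) (hy : ¬ IsLeaf y) :
    (x = hub (Fin.last t) ∧ y = root) ∨ (x = root ∧ y = hub (Fin.last t)) := by
  rcases x with ⟨j, a⟩ | ⟨⟩ <;> rcases y with ⟨k, b⟩ | ⟨⟩
  · rcases (adj_inl_inl.1 h).1 with ⟨-, hb⟩ | ⟨ha, -⟩
    exacts [(hy hb).elim, (hx ha).elim]
  · obtain rfl : a = 0 := not_not.1 hx
    obtain rfl : j = Fin.last t := Fin.ext (adj_inl_root.1 h)
    exact .inl ⟨rfl, rfl⟩
  · obtain rfl : b = 0 := not_not.1 hy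
    obtain rfl : k = Fin.last t := Fin.ext (adj_inl_root.1 h.symm)
    exact .inr ⟨rfl, rfl⟩
  · exact absurd h ((graph m t).irrefl)

theorem encard_neighborSet_le_two_iff (hm : 2 ≤ m) (v : Vert m t) :
    ((graph m t).neighborSet v).encard ≤ 2 ↔ IsLeaf v := by
  refine ⟨fun h => by_contra fun hv => (two_lt_encard_neighborSet_of_not_isLeaf hm hv).not_ge h,
    fun hv => ?_⟩
  rcases v with ⟨j, i⟩ | ⟨⟩
  · exact SimpleGraph.encard_neighborSet_le_two fun x => (adj_leaf_iff hv).1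
  · exact hv.elim

theorem height_le_height_add_one {x y : Vert m t} (h : (graph m t).Adj x y) :
    height y ≤ height x + 1 := by
  rcases x with ⟨j, a⟩ | ⟨⟩ <;> rcases y with ⟨k, b⟩ | ⟨⟩
  · have := (adj_inl_inl.1 h).2
    simp only [height]; omega
  · simp only [height, adj_inl_root.1 (h : (graph m t).Adj _ root), le_refl]
  · simp only [height]; omega
  · exact absurd h ((graph m t).irrefl)

theorem height_le_height_add_length {x y : Vert m t} (p : (graph m t).Walk x y) :
    height y ≤ height x + p.length := by
  induction p with
  | nil => simp
  | cons h _ ih => grw [SimpleGraph.Walk.length_cons, ih, height_le_height_add_one h]; omega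

theorem exists_walk_to_root (hm : 0 < m) (v : Vert m t) :
    ∃ p : (graph m t).Walk v root, p.length = t + 1 - height v := by
  rcases v with ⟨j, a⟩ | ⟨⟩
  · obtain ⟨d, hd⟩ : ∃ d, t = j + d := ⟨t - j, by omega⟩
    induction d generalizing j a with
    | zero =>
      exact ⟨.cons (adj_inl_root.2 (by omega)) .nil, by simp [height]; omega⟩
    | succ d ih =>
      obtain ⟨b, hab⟩ : ∃ b, (_root_.starGraph m).Adj a b := by
        by_cases ha : a = 0
        · exact ⟨Fin.last m, starGraph_adj.2 (.inl ⟨ha, by simp [Fin.ext_iff]; omega⟩)⟩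
        · exact ⟨0, starGraph_adj.2 (.inr ⟨ha, rfl⟩)⟩
      obtain ⟨p, hp⟩ := ih ⟨j + 1, by omega⟩ b (by simp; omega)
      refine ⟨.cons (adj_inl_inl.2 ⟨starGraph_adj.1 hab, by simp⟩) p, ?_⟩
      simp only [SimpleGraph.Walk.length_cons, hp, height]
      omega
  · exact ⟨.nil, by simp [root, height]⟩

theorem dist_root (hm : 0 < m) (v : Vert m t) : (graph m t).dist v root = t + 1 - height v := by
  obtain ⟨p, hp⟩ := exists_walk_to_root hm v
  obtain ⟨q, hq⟩ := (SimpleGraph.Walk.reachable p).exists_walk_length_eq_dist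
  have := height_le_height_add_length q
  have := SimpleGraph.dist_le p
  simp only [root, height] at *
  omega

theorem height_apply_eq (hm : 0 < m) (φ : graph m t ≃g graph m t) (hφ : φ root = root)
    (v : Vert m t) : height (φ v) = height v := by
  have h := φ.dist_eq v root
  rw [hφ, dist_root hm, dist_root hm] at h
  have := height_le (φ v)
  have := height_le v
  omega

/-- Top-level leaves get the codes `1, …, m`, all other leaves `0, …, m - 1`: this offset is what
rules out the automorphism exchanging the root with the top hub. -/
def code (j : Fin (t + 1)) (i : Fin (m + 1)) : ℕ := if (j : ℕ) = t then i else i - 1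

theorem code_le (j : Fin (t + 1)) (i : Fin (m + 1)) : code j i ≤ m := by
  unfold code; split <;> omega

theorem code_injective {j : Fin (t + 1)} {i i' : Fin (m + 1)} (hi : i ≠ 0) (hi' : i' ≠ 0)
    (h : code j i = code j i') : i = i' := by
  have := Fin.pos_of_ne_zero hi
  have := Fin.pos_of_ne_zero hi'
  unfold code at h
  split at h <;> exact Fin.ext (by omega)

/-- A leaf writes the two base-`r` digits of its code on its two edges: the high digit on the edge
going up, the low digit on the other one. -/
def leafDigit (r : ℕ) : Vert m t → Vert m t → ℕ
  | .inl (j, i), x => if i = 0 then 0 else if (j : ℕ) < height x then code j i / r else code j i % r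
  | .inr _, _ => 0

def edgeLabel (r : ℕ) (x y : Vert m t) : ℕ := max (leafDigit r x y) (leafDigit r y x)

theorem edgeLabel_comm (r : ℕ) (x y : Vert m t) : edgeLabel r x y = edgeLabel r y x :=
  max_comm _ _

theorem leafDigit_lt (hr : m < r * r) (x y : Vert m t) : leafDigit r x y < r := by
  have hr0 : 0 < r := Nat.pos_of_ne_zero (by rintro rfl; simp at hr)
  rcases x with ⟨j, i⟩ | _
  · simp only [leafDigit]
    split_ifs
    exacts [hr0, Nat.div_lt_of_lt_mul ((code_le j i).trans_lt hr), Nat.mod_lt _ hr0]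
  · exact hr0

theorem edgeLabel_lt (hr : m < r * r) (x y : Vert m t) : edgeLabel r x y < r :=
  max_lt (leafDigit_lt hr x y) (leafDigit_lt hr y x)

theorem edgeLabel_leaf {j : Fin (t + 1)} {i : Fin (m + 1)} (hi : i ≠ 0) {x : Vert m t}
    (hx : ¬ IsLeaf x) :
    edgeLabel r (.inl (j, i)) x = if (j : ℕ) < height x then code j i / r else code j i % r := by
  have : leafDigit r x (.inl (j, i)) = 0 := by
    rcases x with ⟨k, b⟩ | _
    · simp [leafDigit, not_not.1 hx]
    · rfl
  rw [edgeLabel, this, max_eq_left (Nat.zero_le _)]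
  simp [leafDigit, hi]

def edgeColoring (hr : m < r * r) (e : (graph m t).edgeSet) : Fin r :=
  ⟨Sym2.lift ⟨edgeLabel r, edgeLabel_comm r⟩ e.1, by
    induction e.1 using Sym2.ind with
    | _ x y => exact edgeLabel_lt hr x y⟩

theorem edgeLabel_apply_eq {hr : m < r * r} {φ : graph m t ≃g graph m t}
    (hφ : ∀ e, edgeColoring hr (φ.mapEdgeSet e) = edgeColoring hr e) {x y : Vert m t}
    (h : (graph m t).Adj x y) : edgeLabel r (φ x) (φ y) = edgeLabel r x y := by
  simpa [edgeColoring] using congrArg Fin.val (hφ ⟨s(x, y), h⟩)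

theorem edgeLabel_above {j : Fin (t + 1)} {i : Fin (m + 1)} (hi : i ≠ 0) :
    edgeLabel r (.inl (j, i)) (above j) = code j i / r := by
  rw [edgeLabel_leaf hi (not_isLeaf_above j), if_pos (lt_height_above j)]

theorem edgeLabel_below {j : Fin (t + 1)} {i : Fin (m + 1)} (hi : i ≠ 0) :
    edgeLabel r (.inl (j, i)) (below j) = code j i % r := by
  rw [edgeLabel_leaf hi (not_isLeaf_below j), if_neg (not_lt.2 (height_below_le j))]

section Automorphism

variable {φ : graph m t ≃g graph m t}
  (hcol : ∀ {x y}, (graph m t).Adj x y → edgeLabel r (φ x) (φ y) = edgeLabel r x y)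
include hcol

theorem code_eq_of_apply_eq {j j' : Fin (t + 1)} {i i' : Fin (m + 1)} (hi : i ≠ 0) (hi' : i' ≠ 0)
    (hφ : φ (.inl (j, i)) = .inl (j', i')) (habove : φ (above j) = above j')
    (hbelow : φ (below j) = below j') : code j' i' = code j i := by
  have hhigh := hcol (adj_above (j := j) hi)
  have hlow := hcol (adj_below (j := j) hi)
  rw [hφ, habove, edgeLabel_above hi', edgeLabel_above hi] at hhigh
  rw [hφ, hbelow, edgeLabel_below hi', edgeLabel_below hi] at hlow
  rw [← Nat.div_add_mod (code j' i') r, hhigh, hlow, Nat.div_add_mod]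

theorem apply_root_eq_root (hm : 0 < m) (ht : 1 ≤ t) (hleaf : ∀ v, IsLeaf (φ v) ↔ IsLeaf v) :
    φ root = root := by
  have hnl : ∀ v, ¬ IsLeaf v → ¬ IsLeaf (φ v) := fun v => (hleaf v).not.2
  have htop : (graph m t).Adj (hub (Fin.last t)) root := adj_inl_root.2 rfl
  rcases eq_hub_last_of_adj_of_not_isLeaf (φ.map_adj_iff.2 htop) (hnl _ (by simp [hub]))
    (hnl _ (not_isLeaf_inr _)) with ⟨-, h⟩ | ⟨hhub, hroot⟩
  · exact h
  exfalso
  have hlast : Fin.last m ≠ 0 := by simp [Fin.ext_iff]; omega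
  obtain ⟨j, b, hb, hw⟩ : ∃ j b, b ≠ 0 ∧ φ (.inl (Fin.last t, Fin.last m)) = .inl (j, b) := by
    have hv := (hleaf (.inl (Fin.last t, Fin.last m))).2 hlast
    rcases h : φ (.inl (Fin.last t, Fin.last m)) with ⟨j, b⟩ | _
    · exact ⟨j, b, by simpa [h] using hv, rfl⟩
    · simp [h] at hv
  have habove : φ (above (Fin.last t)) = above j := by
    have hadj := φ.map_adj_iff.2 (adj_above (j := Fin.last t) hlast)
    rw [hw, above_last, hroot] at hadj
    rw [above_last, hroot]
    refine ((adj_leaf_iff hb).1 hadj).resolve_left fun h => ?_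
    simp only [below, hub, Sum.inl.injEq, Prod.mk.injEq, Fin.ext_iff, Fin.val_last] at h
    omega
  have hbelow : φ (below (Fin.last t)) = below j := by
    have hadj := φ.map_adj_iff.2 (adj_below (j := Fin.last t) hlast)
    rw [hw] at hadj
    refine ((adj_leaf_iff hb).1 hadj).resolve_right fun h => ?_
    rw [← habove, above_last] at h
    exact Sum.inl_ne_inr (φ.injective h)
  have hcode := code_eq_of_apply_eq hcol hlast hb hw habove hbelow
  have hj : (j : ℕ) ≠ t := by
    rintro hj
    rw [above_last, hroot, above, dif_neg (by omega)] at habove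
    exact Sum.inl_ne_inr habove
  have := Fin.pos_of_ne_zero hb
  simp only [code, hj, Fin.val_last, if_true, if_false] at hcode
  omega

theorem apply_leaf_eq (hleaf : ∀ v, IsLeaf (φ v) ↔ IsLeaf v)
    (hheight : ∀ v, height (φ v) = height v) (hfix : ∀ v, ¬ IsLeaf v → φ v = v)
    {j : Fin (t + 1)} {i : Fin (m + 1)} (hi : i ≠ 0) : φ (.inl (j, i)) = .inl (j, i) := by
  have hv := (hleaf (.inl (j, i))).2 hi
  have hh := hheight (.inl (j, i))
  rcases h : φ (.inl (j, i)) with ⟨k, c⟩ | _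
  · rw [h] at hv hh
    obtain rfl : k = j := Fin.ext hh
    have hcode := code_eq_of_apply_eq hcol hi hv h (hfix _ (not_isLeaf_above k))
      (hfix _ (not_isLeaf_below k))
    rw [code_injective hv hi hcode]
  · simp [h] at hv

end Automorphism

theorem isDistEdgeColoring_edgeColoring (hm : 2 ≤ m) (ht : 1 ≤ t) (hr : m < r * r) :
    IsDistEdgeColoring (graph m t) (edgeColoring hr) := by
  intro φ hφ
  have hcol := fun {x y} (h : (graph m t).Adj x y) => edgeLabel_apply_eq hφ h
  have hleaf : ∀ v, IsLeaf (φ v) ↔ IsLeaf v := fun v => by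
    rw [← encard_neighborSet_le_two_iff hm, ← encard_neighborSet_le_two_iff hm,
      φ.encard_neighborSet]
  have hroot := apply_root_eq_root hcol (by omega) ht hleaf
  have hheight := height_apply_eq (by omega) φ hroot
  have hfix : ∀ v, ¬ IsLeaf v → φ v = v := fun v hv =>
    eq_of_height_eq ((hleaf v).not.2 hv) hv (hheight v)
  rintro (⟨j, i⟩ | _)
  · by_cases hi : i = 0
    · exact hfix _ (not_not.2 hi)
    · exact apply_leaf_eq hcol hleaf hheight hfix hi
  · exact hfix _ (not_isLeaf_inr _)

end MycStar

theorem distIndex_genMyc_star_le (m t : ℕ) (hm : 2 ≤ m) (ht : 1 ≤ t) :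
    distIndex (genMyc (_root_.starGraph m) t) ≤ sInf {r : ℕ | m + 1 ≤ r ^ 2} := by
  set r := sInf {r : ℕ | m + 1 ≤ r ^ 2}
  have hr : m + 1 ≤ r ^ 2 :=
    Nat.sInf_mem (s := {r : ℕ | m + 1 ≤ r ^ 2}) ⟨m + 1, Nat.le_self_pow two_ne_zero _⟩
  exact Nat.sInf_le ⟨_, MycStar.isDistEdgeColoring_edgeColoring hm ht (by rw [← sq]; omega)⟩
end
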